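/- arXiv:1710.04526 — 3 statements merged into one kernel-verified Lean document; each statement's English description precedes it below -/
import Mathlib

section
/- Let p > 2, a > 0 and 0 ≤ b ≤ p − 1, and let f(s,t) = (a/p)(|s|^p + 2b|s|^{p/2}|t|^{p/2} + |t|^p). Then for all real s, t with s ≠ 0, t ≠ 0 and |s| ≠ |t|, the Hessian matrix D²f(s,t) of second partial derivatives of f at (s,t) is (strictly) positive definite; in particular its trace equals a(p−1)(|s|^{p−2} + |t|^{p−2}) + a (b/2)(p−2)(|s|^{p/2−2}|t|^{p/2} + |t|^{p/2−2}|s|^{p/2}) > 0. -/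
/-!
Away from the axes `f` is smooth, with gradient `(d1 s t, d1 t s)`, and its Hessian has diagonal
entries `d11 s t`, `d11 t s` and off-diagonal entry `d12 s t`. Positive definiteness reduces to
`d11 > 0` and a positive determinant. With `α = |s|^(p/2)`, `β = |t|^(p/2)` the determinant is
`a² |s|^(p/2-2) |t|^(p/2-2) (p-1) (b(p/2-1)(α-β)² + (p-1-b)(1+b)αβ)`, which is positive:
if `b = 0` the second summand is, and if `b > 0` the first is, since `α ≠ β`.
-/

open Real

theorem hasDerivAt_abs_rpow_of_ne_zero (r : ℝ) {x : ℝ} (hx : x ≠ 0) :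
    HasDerivAt (fun y : ℝ ↦ |y| ^ r) (r * |x| ^ (r - 2) * x) x := by
  have hx' : |x| ≠ 0 := abs_ne_zero.mpr hx
  refine ((hasDerivAt_abs hx).rpow_const (p := r) (Or.inl hx')).congr_deriv ?_
  rw [show r - 1 = r - 2 + 1 by ring, rpow_add_one hx']
  linear_combination r * |x| ^ (r - 2) * sign_mul_abs x

theorem sq_mul_abs_rpow_sub_two (r : ℝ) {x : ℝ} (hx : x ≠ 0) :
    x ^ 2 * |x| ^ (r - 2) = |x| ^ r := by
  rw [← sq_abs, ← rpow_natCast, ← rpow_add (abs_pos.mpr hx)]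
  norm_num

theorem hasDerivAt_mul_abs_rpow_of_ne_zero (r : ℝ) {x : ℝ} (hx : x ≠ 0) :
    HasDerivAt (fun y : ℝ ↦ y * |y| ^ r) ((r + 1) * |x| ^ r) x := by
  refine ((hasDerivAt_id x).mul (hasDerivAt_abs_rpow_of_ne_zero r hx)).congr_deriv ?_
  rw [id, ← sq_mul_abs_rpow_sub_two r hx]
  ring

theorem fderiv_fderiv_eq_of_eventually_hasFDerivAt {𝕜 E F : Type*} [NontriviallyNormedField 𝕜]
    [NormedAddCommGroup E] [NormedSpace 𝕜 E] [NormedAddCommGroup F] [NormedSpace 𝕜 F]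
    {f : E → F} {f' : E → E →L[𝕜] F} {f'' : E →L[𝕜] E →L[𝕜] F} {x : E}
    (hf : ∀ᶠ y in nhds x, HasFDerivAt f (f' y) y) (hf' : HasFDerivAt f' f'' x) :
    fderiv 𝕜 (fderiv 𝕜 f) x = f'' :=
  (hf'.congr_of_eventuallyEq (hf.mono fun _ hy ↦ hy.fderiv)).fderiv

theorem quadratic_form_pos_of_sq_lt {A B C u v : ℝ} (hA : 0 < A) (hB : B ^ 2 < A * C)
    (huv : u ≠ 0 ∨ v ≠ 0) :
    0 < A * u ^ 2 + 2 * B * u * v + C * v ^ 2 := by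
  rcases eq_or_ne v 0 with rfl | hv
  · have hu : u ≠ 0 := huv.resolve_right (not_not.mpr rfl)
    simpa using mul_pos hA (by positivity : 0 < u ^ 2)
  · have hsq : A * (A * u ^ 2 + 2 * B * u * v + C * v ^ 2) =
        (A * u + B * v) ^ 2 + (A * C - B ^ 2) * v ^ 2 := by
      ring
    refine pos_of_mul_pos_right (hsq ▸ ?_) hA.le
    exact add_pos_of_nonneg_of_pos (sq_nonneg _) (mul_pos (sub_pos.mpr hB) (by positivity))

theorem cross_sq_lt_diag_mul_diag {p b α β : ℝ} (hp : 2 < p) (hb0 : 0 ≤ b) (hb1 : b ≤ p - 1)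
    (hα : 0 < α) (hβ : 0 < β) (hαβ : α ≠ β) :
    (b * (p / 2)) ^ 2 * (α * β) <
      ((p - 1) * α + b * (p / 2 - 1) * β) * ((p - 1) * β + b * (p / 2 - 1) * α) := by
  have hdet : ((p - 1) * α + b * (p / 2 - 1) * β) * ((p - 1) * β + b * (p / 2 - 1) * α) -
      (b * (p / 2)) ^ 2 * (α * β) =
      (p - 1) * (b * (p / 2 - 1) * (α - β) ^ 2 + (p - 1 - b) * (1 + b) * (α * β)) := by
    ring
  have hαβ' : 0 < α * β := mul_pos hα hβ
  have : 0 < b * (p / 2 - 1) * (α - β) ^ 2 + (p - 1 - b) * (1 + b) * (α * β) := by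
    rcases hb0.eq_or_lt with rfl | hb
    · nlinarith
    · have h1 : 0 < b * (p / 2 - 1) * (α - β) ^ 2 := by
        have : 0 < p / 2 - 1 := by linarith
        have := sub_ne_zero.mpr hαβ
        positivity
      have h2 : 0 ≤ (p - 1 - b) * (1 + b) * (α * β) :=
        mul_nonneg (mul_nonneg (by linarith) (by linarith)) hαβ'.le
      linarith
  rw [← sub_pos, hdet]
  exact mul_pos (by linarith) this

noncomputable def powerPotential (p a b : ℝ) (q : ℝ × ℝ) : ℝ :=
  a / p * (|q.1| ^ p + 2 * b * |q.1| ^ (p / 2) * |q.2| ^ (p / 2) + |q.2| ^ p)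

namespace powerPotential

variable (p a b : ℝ)

/-- `∂₁ powerPotential` at `(x, y)`; by symmetry, `∂₂` at `(x, y)` is `d1 p a b y x`. -/
noncomputable def d1 (x y : ℝ) : ℝ :=
  a * (x * |x| ^ (p - 2)) + a * b * (x * |x| ^ (p / 2 - 2)) * |y| ^ (p / 2)

noncomputable def d11 (x y : ℝ) : ℝ :=
  a * (p - 1) * |x| ^ (p - 2) + a * b * (p / 2 - 1) * (|x| ^ (p / 2 - 2) * |y| ^ (p / 2))

noncomputable def d12 (x y : ℝ) : ℝ :=
  a * b * (p / 2) * (x * |x| ^ (p / 2 - 2)) * (y * |y| ^ (p / 2 - 2))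

theorem d12_comm (x y : ℝ) : d12 p a b y x = d12 p a b x y := by
  unfold d12; ring

variable {p a b}

theorem hasFDerivAt {x y : ℝ} (hp : p ≠ 0) (hx : x ≠ 0) (hy : y ≠ 0) :
    HasFDerivAt (powerPotential p a b)
      (d1 p a b x y • ContinuousLinearMap.fst ℝ ℝ ℝ +
        d1 p a b y x • ContinuousLinearMap.snd ℝ ℝ ℝ)
      (x, y) := by
  have hX := hasFDerivAt_fst (𝕜 := ℝ) (p := (x, y))
  have hY := hasFDerivAt_snd (𝕜 := ℝ) (p := (x, y))
  have h := (((hasDerivAt_abs_rpow_of_ne_zero p hx).comp_hasFDerivAt _ hX).add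
    ((((hasDerivAt_abs_rpow_of_ne_zero (p / 2) hx).comp_hasFDerivAt _ hX).const_mul (2 * b)).mul
      ((hasDerivAt_abs_rpow_of_ne_zero (p / 2) hy).comp_hasFDerivAt _ hY)) |>.add
    ((hasDerivAt_abs_rpow_of_ne_zero p hy).comp_hasFDerivAt _ hY)).const_mul (a / p)
  refine h.congr_fderiv (ContinuousLinearMap.ext fun v ↦ ?_)
  simp only [Function.comp_apply, smul_add, add_apply, smul_apply, ContinuousLinearMap.coe_fst',
    smul_eq_mul, ContinuousLinearMap.coe_snd', d1]
  field_simp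
  ring

theorem hasFDerivAt_d1_comp {E : Type*} [NormedAddCommGroup E] [NormedSpace ℝ E]
    {u w : E → ℝ} {u' w' : E →L[ℝ] ℝ} {z : E}
    (hu : HasFDerivAt u u' z) (hw : HasFDerivAt w w' z) (hu0 : u z ≠ 0) (hw0 : w z ≠ 0) :
    HasFDerivAt (fun e ↦ d1 p a b (u e) (w e))
      (d11 p a b (u z) (w z) • u' + d12 p a b (u z) (w z) • w') z := by
  have hU := (hasDerivAt_mul_abs_rpow_of_ne_zero (p - 2) hu0).comp_hasFDerivAt z hu
  have hV := (hasDerivAt_mul_abs_rpow_of_ne_zero (p / 2 - 2) hu0).comp_hasFDerivAt z hu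
  have hW := (hasDerivAt_abs_rpow_of_ne_zero (p / 2) hw0).comp_hasFDerivAt z hw
  have h := (hU.const_mul a).add ((hV.const_mul (a * b)).mul hW)
  refine h.congr_fderiv (ContinuousLinearMap.ext fun v ↦ ?_)
  simp only [Function.comp_apply, add_apply, smul_apply, smul_eq_mul, d11, d12]
  ring

theorem hasFDerivAt_gradient {x y : ℝ} (hx : x ≠ 0) (hy : y ≠ 0) :
    HasFDerivAt
      (fun q : ℝ × ℝ ↦ d1 p a b q.1 q.2 • ContinuousLinearMap.fst ℝ ℝ ℝ +
        d1 p a b q.2 q.1 • ContinuousLinearMap.snd ℝ ℝ ℝ)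
      ((d11 p a b x y • ContinuousLinearMap.fst ℝ ℝ ℝ +
          d12 p a b x y • ContinuousLinearMap.snd ℝ ℝ ℝ).smulRight
            (ContinuousLinearMap.fst ℝ ℝ ℝ) +
        (d11 p a b y x • ContinuousLinearMap.snd ℝ ℝ ℝ +
          d12 p a b y x • ContinuousLinearMap.fst ℝ ℝ ℝ).smulRight
            (ContinuousLinearMap.snd ℝ ℝ ℝ))
      (x, y) := by
  have hX := hasFDerivAt_fst (𝕜 := ℝ) (p := (x, y))
  have hY := hasFDerivAt_snd (𝕜 := ℝ) (p := (x, y))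
  exact ((hasFDerivAt_d1_comp (p := p) (a := a) (b := b) hX hY hx hy).smul_const
    (ContinuousLinearMap.fst ℝ ℝ ℝ)).add
    ((hasFDerivAt_d1_comp (p := p) (a := a) (b := b) hY hX hy hx).smul_const
    (ContinuousLinearMap.snd ℝ ℝ ℝ))

theorem fderiv_fderiv_apply {x y : ℝ} (hp : p ≠ 0) (hx : x ≠ 0) (hy : y ≠ 0)
    (v w : ℝ × ℝ) :
    fderiv ℝ (fderiv ℝ (powerPotential p a b)) (x, y) v w =
      d11 p a b x y * v.1 * w.1 + d12 p a b x y * (v.1 * w.2 + v.2 * w.1) +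
        d11 p a b y x * v.2 * w.2 := by
  have hgrad : ∀ᶠ q in nhds (x, y), HasFDerivAt (powerPotential p a b)
      (d1 p a b q.1 q.2 • ContinuousLinearMap.fst ℝ ℝ ℝ +
        d1 p a b q.2 q.1 • ContinuousLinearMap.snd ℝ ℝ ℝ) q := by
    filter_upwards [continuous_fst.continuousAt.eventually_ne hx,
      continuous_snd.continuousAt.eventually_ne hy] with q hq1 hq2
    exact hasFDerivAt hp hq1 hq2
  rw [fderiv_fderiv_eq_of_eventually_hasFDerivAt hgrad (hasFDerivAt_gradient hx hy)]
  simp only [d12_comm, add_apply, ContinuousLinearMap.smulRight_apply, smul_apply,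
    ContinuousLinearMap.coe_fst', smul_eq_mul, ContinuousLinearMap.coe_snd']
  ring

theorem d11_pos {x y : ℝ} (hp : 2 ≤ p) (ha : 0 < a) (hb : 0 ≤ b) (hx : x ≠ 0) :
    0 < d11 p a b x y := by
  have h1 : 0 < a * (p - 1) * |x| ^ (p - 2) := by
    have : 0 < p - 1 := by linarith
    have := abs_pos.mpr hx
    positivity
  have h2 : 0 ≤ a * b * (p / 2 - 1) * (|x| ^ (p / 2 - 2) * |y| ^ (p / 2)) := by
    have : 0 ≤ p / 2 - 1 := by linarith
    positivity
  exact add_pos_of_pos_of_nonneg h1 h2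

theorem d12_sq_lt_d11_mul_d11 {x y : ℝ} (hp : 2 < p) (ha : 0 < a) (hb0 : 0 ≤ b)
    (hb1 : b ≤ p - 1) (hx : x ≠ 0) (hy : y ≠ 0) (hxy : |x| ≠ |y|) :
    d12 p a b x y ^ 2 < d11 p a b x y * d11 p a b y x := by
  have hsplit : ∀ {z : ℝ}, z ≠ 0 → |z| ^ (p - 2) = |z| ^ (p / 2 - 2) * |z| ^ (p / 2) :=
    fun hz ↦ by rw [← rpow_add (abs_pos.mpr hz)]; ring_nf
  have hαβ : |x| ^ (p / 2) ≠ |y| ^ (p / 2) := by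
    rwa [Ne, rpow_left_inj (abs_nonneg x) (abs_nonneg y) (by positivity)]
  have hd11 : ∀ {z w : ℝ}, z ≠ 0 → d11 p a b z w =
      a * |z| ^ (p / 2 - 2) * ((p - 1) * |z| ^ (p / 2) + b * (p / 2 - 1) * |w| ^ (p / 2)) :=
    fun hz ↦ by unfold d11; rw [hsplit hz]; ring
  have hd12 : d12 p a b x y ^ 2 = (a * |x| ^ (p / 2 - 2)) * (a * |y| ^ (p / 2 - 2)) *
      ((b * (p / 2)) ^ 2 * (|x| ^ (p / 2) * |y| ^ (p / 2))) := by
    unfold d12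
    rw [← sq_mul_abs_rpow_sub_two (p / 2) hx, ← sq_mul_abs_rpow_sub_two (p / 2) hy]
    ring
  have := abs_pos.mpr hx
  have := abs_pos.mpr hy
  rw [hd12, hd11 hx, hd11 hy]
  linear_combination mul_lt_mul_of_pos_left
    (cross_sq_lt_diag_mul_diag hp hb0 hb1 (by positivity) (by positivity) hαβ)
    (by positivity : 0 < a * |x| ^ (p / 2 - 2) * (a * |y| ^ (p / 2 - 2)))

theorem fderiv_fderiv_apply_self_pos {x y : ℝ} (hp : 2 < p) (ha : 0 < a) (hb0 : 0 ≤ b)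
    (hb1 : b ≤ p - 1) (hx : x ≠ 0) (hy : y ≠ 0) (hxy : |x| ≠ |y|) {v : ℝ × ℝ}
    (hv : v ≠ 0) :
    0 < fderiv ℝ (fderiv ℝ (powerPotential p a b)) (x, y) v v := by
  have hv' : v.1 ≠ 0 ∨ v.2 ≠ 0 := by
    contrapose! hv
    exact Prod.ext hv.1 hv.2
  rw [fderiv_fderiv_apply (by positivity) hx hy]
  linear_combination quadratic_form_pos_of_sq_lt (d11_pos hp.le ha hb0 hx)
    (d12_sq_lt_d11_mul_d11 hp ha hb0 hb1 hx hy hxy) hv'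

end powerPotential

open powerPotential in
/-- for `p > 2`, `a > 0`, `0 ≤ b ≤ p - 1` and `s ≠ 0`, `t ≠ 0`, `|s| ≠ |t|`,
the Hessian of `f(s,t) = (a/p)(|s|^p + 2b|s|^(p/2)|t|^(p/2) + |t|^p)` at `(s,t)` is strictly
positive definite; in particular its trace equals
`a(p-1)(|s|^(p-2) + |t|^(p-2)) + a(b/2)(p-2)(|s|^(p/2-2)|t|^(p/2) + |t|^(p/2-2)|s|^(p/2)) > 0`. -/
theorem stmt_16 (p a b : ℝ) (hp : 2 < p) (ha : 0 < a) (hb0 : 0 ≤ b) (hb1 : b ≤ p - 1)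
    (f : ℝ × ℝ → ℝ)
    (hf : ∀ q : ℝ × ℝ,
      f q = (a / p) * (|q.1| ^ p + 2 * b * |q.1| ^ (p / 2) * |q.2| ^ (p / 2) + |q.2| ^ p))
    (s t : ℝ) (hs : s ≠ 0) (ht : t ≠ 0) (hst : |s| ≠ |t|) :
    (∀ v : ℝ × ℝ, v ≠ 0 → 0 < fderiv ℝ (fderiv ℝ f) (s, t) v v) ∧
      fderiv ℝ (fderiv ℝ f) (s, t) (1, 0) (1, 0) + fderiv ℝ (fderiv ℝ f) (s, t) (0, 1) (0, 1) =
        a * (p - 1) * (|s| ^ (p - 2) + |t| ^ (p - 2)) +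
          a * (b / 2) * (p - 2) *
            (|s| ^ (p / 2 - 2) * |t| ^ (p / 2) + |t| ^ (p / 2 - 2) * |s| ^ (p / 2)) ∧
      0 < a * (p - 1) * (|s| ^ (p - 2) + |t| ^ (p - 2)) +
          a * (b / 2) * (p - 2) *
            (|s| ^ (p / 2 - 2) * |t| ^ (p / 2) + |t| ^ (p / 2 - 2) * |s| ^ (p / 2)) := by
  obtain rfl : f = powerPotential p a b := funext hf
  have htrace : d11 p a b s t + d11 p a b t s =
      a * (p - 1) * (|s| ^ (p - 2) + |t| ^ (p - 2)) +
        a * (b / 2) * (p - 2) *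
          (|s| ^ (p / 2 - 2) * |t| ^ (p / 2) + |t| ^ (p / 2 - 2) * |s| ^ (p / 2)) := by
    unfold d11; ring
  refine ⟨fun v hv ↦ fderiv_fderiv_apply_self_pos hp ha hb0 hb1 hs ht hst hv, ?_,
    htrace ▸ add_pos (d11_pos hp.le ha hb0 hs) (d11_pos hp.le ha hb0 ht)⟩
  have hp0 : p ≠ 0 := by positivity
  rw [fderiv_fderiv_apply hp0 hs ht, fderiv_fderiv_apply hp0 hs ht, ← htrace]
  ring
end

section
/- Let N ≥ 1, p > 2, p′ = p/(p−1), and let a, b : ℝᴺ → ℝ be measurable functions with a(x) ≥ a₀ > 0 and 0 ≤ b(x) ≤ p − 1 for almost every x. For ū, v̄ ∈ L^{p′}(ℝᴺ), the function x ↦ h(x, ū(x), v̄(x)) is measurable, where h(x,·,·) denotes the Legendre transform of f(x,s,t) = (a(x)/p)(|s|^p + 2b(x)|s|^{p/2}|t|^{p/2} + |t|^p); moreover h(·, ū, v̄) is integrable on ℝᴺ. -/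
/-!
For fixed `x`, `h(x, ·, ·)` is a supremum of functions continuous in `(s, t)`, so it equals the
supremum over a countable dense set of `ℝ²`, which is measurable in `x`. Since `b ≥ 0` and
`a ≥ a₀`, `f(x, s, t) ≥ (a₀/p)(|s|^p + |t|^p)`, and Young's inequality with weight `a₀` gives
`0 ≤ h(x, ū, v̄) ≤ C (|ū|^{p'} + |v̄|^{p'})`, an integrable majorant.
-/

open MeasureTheory

theorem Measurable.ciSup_of_continuous {α X : Type*} [MeasurableSpace α] [TopologicalSpace X]
    [TopologicalSpace.SeparableSpace X] {F : α → X → ℝ} (hcont : ∀ x, Continuous (F x))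
    (hmeas : ∀ y, Measurable fun x => F x y) : Measurable fun x => ⨆ y, F x y := by
  obtain ⟨D, hDc, hD⟩ := TopologicalSpace.exists_countable_dense X
  have := hDc.to_subtype
  simp_rw [← hD.ciSup' (hcont _)]
  exact .iSup fun d => hmeas d

theorem Real.mul_le_weighted_young {p q c : ℝ} (hpq : p.HolderConjugate q) (hc : 0 < c)
    (s t : ℝ) : s * t ≤ c / p * |s| ^ p + c ^ (-(q / p)) / q * |t| ^ q := by
  have hsplit : s * t = (c ^ p⁻¹ * s) * (c ^ (-p⁻¹) * t) := by
    rw [mul_mul_mul_comm, ← Real.rpow_add hc, add_neg_cancel, Real.rpow_zero, one_mul]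
  have hs : |c ^ p⁻¹ * s| ^ p = c * |s| ^ p := by
    rw [abs_mul, abs_of_pos (by positivity), Real.mul_rpow (by positivity) (abs_nonneg _),
      ← Real.rpow_mul hc.le, inv_mul_cancel₀ hpq.ne_zero, Real.rpow_one]
  have ht : |c ^ (-p⁻¹) * t| ^ q = c ^ (-(q / p)) * |t| ^ q := by
    rw [abs_mul, abs_of_pos (by positivity), Real.mul_rpow (by positivity) (abs_nonneg _),
      ← Real.rpow_mul hc.le, neg_mul, inv_mul_eq_div]
  calc s * t ≤ |c ^ p⁻¹ * s| ^ p / p + |c ^ (-p⁻¹) * t| ^ q / q := by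
        rw [hsplit]; exact Real.young_inequality _ _ hpq
    _ = c / p * |s| ^ p + c ^ (-(q / p)) / q * |t| ^ q := by rw [hs, ht]; ring

/-- `couplingEnergy p (a x) (b x)` is `f(x, ·, ·)`; `couplingEnergyConj` below is `h(x, ·, ·)`. -/
noncomputable def couplingEnergy (p A B s t : ℝ) : ℝ :=
  A / p * (|s| ^ p + 2 * B * |s| ^ (p / 2) * |t| ^ (p / 2) + |t| ^ p)

theorem continuous_couplingEnergy {p : ℝ} (hp : 0 < p) (A B : ℝ) :
    Continuous fun st : ℝ × ℝ => couplingEnergy p A B st.1 st.2 := by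
  unfold couplingEnergy
  fun_prop (disch := positivity)

noncomputable def couplingEnergyConj (p A B sb tb : ℝ) : ℝ :=
  ⨆ st : ℝ × ℝ, st.1 * sb + st.2 * tb - couplingEnergy p A B st.1 st.2

section
variable {p q a₀ A B : ℝ}

theorem couplingEnergy_zero_zero (hp : 0 < p) : couplingEnergy p A B 0 0 = 0 := by
  simp [couplingEnergy, Real.zero_rpow hp.ne', Real.zero_rpow (half_pos hp).ne']

theorem mul_add_mul_sub_couplingEnergy_le (hpq : p.HolderConjugate q) (ha₀ : 0 < a₀)
    (hA : a₀ ≤ A) (hB : 0 ≤ B) (s t sb tb : ℝ) :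
    s * sb + t * tb - couplingEnergy p A B s t ≤ a₀ ^ (-(q / p)) / q * (|sb| ^ q + |tb| ^ q) := by
  have hcross : 0 ≤ 2 * B * |s| ^ (p / 2) * |t| ^ (p / 2) := by positivity
  have henergy : a₀ / p * (|s| ^ p + |t| ^ p) ≤ couplingEnergy p A B s t :=
    mul_le_mul (div_le_div_of_nonneg_right hA hpq.nonneg) (by linarith) (by positivity)
      (div_nonneg (ha₀.le.trans hA) hpq.nonneg)
  linarith [Real.mul_le_weighted_young hpq ha₀ s sb, Real.mul_le_weighted_young hpq ha₀ t tb]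

theorem couplingEnergyConj_le (hpq : p.HolderConjugate q) (ha₀ : 0 < a₀) (hA : a₀ ≤ A)
    (hB : 0 ≤ B) (sb tb : ℝ) :
    couplingEnergyConj p A B sb tb ≤ a₀ ^ (-(q / p)) / q * (|sb| ^ q + |tb| ^ q) :=
  ciSup_le fun st => mul_add_mul_sub_couplingEnergy_le hpq ha₀ hA hB st.1 st.2 sb tb

theorem couplingEnergyConj_nonneg (hpq : p.HolderConjugate q) (ha₀ : 0 < a₀) (hA : a₀ ≤ A)
    (hB : 0 ≤ B) (sb tb : ℝ) : 0 ≤ couplingEnergyConj p A B sb tb := by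
  unfold couplingEnergyConj
  have hbdd : BddAbove (Set.range fun st : ℝ × ℝ =>
      st.1 * sb + st.2 * tb - couplingEnergy p A B st.1 st.2) :=
    ⟨_, Set.forall_mem_range.2 fun st =>
      mul_add_mul_sub_couplingEnergy_le hpq ha₀ hA hB st.1 st.2 sb tb⟩
  simpa [couplingEnergy_zero_zero hpq.pos] using le_ciSup hbdd (0, 0)

end

theorem Measurable.couplingEnergyConj {α : Type*} [MeasurableSpace α] {p : ℝ} (hp : 0 < p)
    {a b u v : α → ℝ} (ha : Measurable a) (hb : Measurable b) (hu : Measurable u)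
    (hv : Measurable v) :
    Measurable fun x => couplingEnergyConj p (a x) (b x) (u x) (v x) := by
  refine .ciSup_of_continuous (fun x => ?_) fun st => ?_
  · exact ((continuous_fst.mul continuous_const).add (continuous_snd.mul continuous_const)).sub
      (continuous_couplingEnergy hp _ _)
  · unfold _root_.couplingEnergy
    fun_prop

theorem stmt_18_general (N : ℕ) (p p' a₀ : ℝ) (hp : 2 < p) (hp' : p' = p / (p - 1))
    (ha₀ : 0 < a₀)
    (a b : (Fin N → ℝ) → ℝ) (hma : Measurable a) (hmb : Measurable b)
    (ha : ∀ᵐ x ∂(volume : Measure (Fin N → ℝ)), a₀ ≤ a x)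
    (hb : ∀ᵐ x ∂(volume : Measure (Fin N → ℝ)), 0 ≤ b x ∧ b x ≤ p - 1)
    (u v : (Fin N → ℝ) → ℝ) (hmu : Measurable u) (hmv : Measurable v)
    (hu : MemLp u (ENNReal.ofReal p') (volume : Measure (Fin N → ℝ)))
    (hv : MemLp v (ENNReal.ofReal p') (volume : Measure (Fin N → ℝ)))
    (h : (Fin N → ℝ) → ℝ → ℝ → ℝ)
    (hh : ∀ x sb tb, h x sb tb = ⨆ st : ℝ × ℝ,
      (st.1 * sb + st.2 * tb -
        (a x / p) * (|st.1| ^ p + 2 * b x * |st.1| ^ (p / 2) * |st.2| ^ (p / 2) + |st.2| ^ p))) :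
    Measurable (fun x => h x (u x) (v x)) ∧
      Integrable (fun x => h x (u x) (v x)) (volume : Measure (Fin N → ℝ)) := by
  obtain rfl : h = fun x => couplingEnergyConj p (a x) (b x) :=
    funext fun x => funext fun sb => funext fun tb => hh x sb tb
  have hpq : p.HolderConjugate p' := (Real.holderConjugate_iff_eq_conjExponent (by linarith)).2 hp'
  have hmeas := hma.couplingEnergyConj hpq.pos hmb hmu hmv
  have hq : ENNReal.ofReal p' ≠ 0 := (ENNReal.ofReal_pos.2 hpq.symm.pos).ne'
  have hbound : Integrable (fun x => a₀ ^ (-(p' / p)) / p' * (|u x| ^ p' + |v x| ^ p')) := by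
    have hu' := hu.integrable_norm_rpow hq ENNReal.ofReal_ne_top
    have hv' := hv.integrable_norm_rpow hq ENNReal.ofReal_ne_top
    rw [ENNReal.toReal_ofReal hpq.symm.nonneg] at hu' hv'
    exact (hu'.add hv').const_mul _
  refine ⟨hmeas, hbound.mono' hmeas.aestronglyMeasurable ?_⟩
  filter_upwards [ha, hb] with x hax hbx
  rw [Real.norm_eq_abs, abs_of_nonneg (couplingEnergyConj_nonneg hpq ha₀ hax hbx.1 _ _)]
  exact couplingEnergyConj_le hpq ha₀ hax hbx.1 _ _

/-- for measurable `a, b : ℝᴺ → ℝ` with `a ≥ a₀ > 0` and `0 ≤ b ≤ p - 1` a.e.,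
and `ū, v̄ ∈ L^(p')(ℝᴺ)`, the function `x ↦ h(x, ū(x), v̄(x))` is measurable and integrable,
where `h(x,·,·)` is the Legendre transform of
`f(x,s,t) = (a(x)/p)(|s|^p + 2b(x)|s|^(p/2)|t|^(p/2) + |t|^p)`. -/
theorem stmt_18 (N : ℕ) (hN : 1 ≤ N) (p p' a₀ : ℝ) (hp : 2 < p) (hp' : p' = p / (p - 1))
    (ha₀ : 0 < a₀)
    (a b : (Fin N → ℝ) → ℝ) (hma : Measurable a) (hmb : Measurable b)
    (ha : ∀ᵐ x ∂(volume : Measure (Fin N → ℝ)), a₀ ≤ a x)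
    (hb : ∀ᵐ x ∂(volume : Measure (Fin N → ℝ)), 0 ≤ b x ∧ b x ≤ p - 1)
    (u v : (Fin N → ℝ) → ℝ) (hmu : Measurable u) (hmv : Measurable v)
    (hu : MemLp u (ENNReal.ofReal p') (volume : Measure (Fin N → ℝ)))
    (hv : MemLp v (ENNReal.ofReal p') (volume : Measure (Fin N → ℝ)))
    (h : (Fin N → ℝ) → ℝ → ℝ → ℝ)
    (hh : ∀ x sb tb, h x sb tb = ⨆ st : ℝ × ℝ,
      (st.1 * sb + st.2 * tb -
        (a x / p) * (|st.1| ^ p + 2 * b x * |st.1| ^ (p / 2) * |st.2| ^ (p / 2) + |st.2| ^ p))) :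
    Measurable (fun x => h x (u x) (v x)) ∧
      Integrable (fun x => h x (u x) (v x)) (volume : Measure (Fin N → ℝ)) :=
  stmt_18_general N p p' a₀ hp hp' ha₀ a b hma hmb ha hb u v hmu hmv hu hv h hh
end

section
/- Let N ≥ 1, p > 2, p′ = p/(p−1), and let a, b : ℝᴺ → ℝ be measurable with a(x) ≥ a₀ > 0 and 0 ≤ b(x) ≤ b₊ ≤ p − 1 for almost every x. Let h(x,·,·) be the Legendre transform of f(x,s,t) = (a(x)/p)(|s|^p + 2b(x)|s|^{p/2}|t|^{p/2} + |t|^p), and let h₊ be the Legendre transform of f₊(s,t) = (1/p)(|s|^p + 2b₊|s|^{p/2}|t|^{p/2} + |t|^p). Then for all ū, v̄ ∈ L^{p′}(ℝᴺ) one has ∫_{ℝᴺ} h(x, ū(x), v̄(x)) dx ≥ h₊( ‖a^{−1/p} ū‖_{p′} , ‖a^{−1/p} v̄‖_{p′} ), where ‖a^{−1/p} w‖_{p′} = ( ∫_{ℝᴺ} a(x)^{1−p′} |w(x)|^{p′} dx )^{1/p′}. -/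
/-!
For fixed `(s, t)` insert into the supremum defining `h(x, ū(x), v̄(x))` the test pair
`S(x) = s c_u a^{1-p'} sign(ū) |ū|^{p'-1}`, `T(x) = t c_v a^{1-p'} sign(v̄) |v̄|^{p'-1}`, i.e. the
maximisers of the decoupled problems, scaled by `c_u = (∫ a^{1-p'} |ū|^{p'})^{-1/p}` and
`c_v = (∫ a^{1-p'} |v̄|^{p'})^{-1/p}`. The linear terms then integrate to
`s ‖a^{-1/p} ū‖_{p'} + t ‖a^{-1/p} v̄‖_{p'}`, the power terms to at most `|s|^p / p` and
`|t|^p / p`, and the cross term, bounded pointwise through `b ≤ b₊` and `2xy ≤ x² + y²`, to at most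
`2 b₊ |s|^{p/2} |t|^{p/2} / p`. Taking the supremum over `(s, t)` gives `h₊`. By Young's
inequality `0 ≤ h(x, ū, v̄) ≤ a^{1-p'} (|ū|^{p'} + |v̄|^{p'}) / p'`, so the left-hand side is
integrable.
-/

open MeasureTheory

noncomputable section

/-- `f(x, s, t)` at a point where `a(x) = A`, `b(x) = B`; `f₊` is `coupledPow p 1 b₊`. -/
def coupledPow (p A B s t : ℝ) : ℝ :=
  A / p * (|s| ^ p + 2 * B * |s| ^ (p / 2) * |t| ^ (p / 2) + |t| ^ p)

def legendreConj (p A B w z : ℝ) : ℝ :=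
  ⨆ st : ℝ × ℝ, st.1 * w + st.2 * z - coupledPow p A B st.1 st.2

/-- The maximiser of `s ↦ s * w - A * |s| ^ p / p`. -/
def dualPoint (q A w : ℝ) : ℝ := A ^ (1 - q) * ((SignType.sign w : ℝ) * |w| ^ (q - 1))

namespace Real
variable {p q : ℝ}

lemma young_inequality_weighted (hpq : p.HolderConjugate q) {A : ℝ} (hA : 0 < A) (s w : ℝ) :
    s * w ≤ A / p * |s| ^ p + A ^ (1 - q) / q * |w| ^ q := by
  have hqp : -p⁻¹ * q = 1 - q := by
    have := hpq.inv_add_inv_eq_one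
    field_simp [hpq.ne_zero, hpq.symm.ne_zero] at this ⊢
    linarith
  calc s * w ≤ (A ^ p⁻¹ * |s|) * (A ^ (-p⁻¹) * |w|) := by
        rw [mul_mul_mul_comm, ← Real.rpow_add hA, add_neg_cancel, Real.rpow_zero, one_mul,
          ← abs_mul]
        exact le_abs_self _
    _ ≤ (A ^ p⁻¹ * |s|) ^ p / p + (A ^ (-p⁻¹) * |w|) ^ q / q :=
        Real.young_inequality_of_nonneg (by positivity) (by positivity) hpq
    _ = A / p * |s| ^ p + A ^ (1 - q) / q * |w| ^ q := by
        rw [Real.mul_rpow (by positivity) (abs_nonneg _),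
          Real.mul_rpow (by positivity) (abs_nonneg _), ← Real.rpow_mul hA.le,
          ← Real.rpow_mul hA.le, inv_mul_cancel₀ hpq.ne_zero, Real.rpow_one, hqp]
        ring

end Real

variable {p q A B : ℝ}

lemma sub_coupledPow_le (hpq : p.HolderConjugate q) (hA : 0 < A) (hB : 0 ≤ B) (s t w z : ℝ) :
    s * w + t * z - coupledPow p A B s t ≤ (A ^ (1 - q) * |w| ^ q + A ^ (1 - q) * |z| ^ q) / q := by
  have hs := Real.young_inequality_weighted hpq hA s w
  have ht := Real.young_inequality_weighted hpq hA t z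
  have hcross : 0 ≤ A / p * (2 * B * |s| ^ (p / 2) * |t| ^ (p / 2)) := by
    have := hpq.pos
    positivity
  unfold coupledPow
  linear_combination hs + ht + hcross

lemma bddAbove_range_sub_coupledPow (hpq : p.HolderConjugate q) (hA : 0 < A) (hB : 0 ≤ B)
    (w z : ℝ) :
    BddAbove (Set.range fun st : ℝ × ℝ => st.1 * w + st.2 * z - coupledPow p A B st.1 st.2) :=
  ⟨_, Set.forall_mem_range.2 fun st => sub_coupledPow_le hpq hA hB st.1 st.2 w z⟩

lemma legendreConj_le (hpq : p.HolderConjugate q) (hA : 0 < A) (hB : 0 ≤ B) (w z : ℝ) :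
    legendreConj p A B w z ≤ (A ^ (1 - q) * |w| ^ q + A ^ (1 - q) * |z| ^ q) / q :=
  ciSup_le fun st => sub_coupledPow_le hpq hA hB st.1 st.2 w z

lemma le_legendreConj (hpq : p.HolderConjugate q) (hA : 0 < A) (hB : 0 ≤ B) (s t w z : ℝ) :
    s * w + t * z - coupledPow p A B s t ≤ legendreConj p A B w z :=
  le_ciSup (bddAbove_range_sub_coupledPow hpq hA hB w z) (s, t)

lemma legendreConj_nonneg (hpq : p.HolderConjugate q) (hA : 0 < A) (hB : 0 ≤ B) (w z : ℝ) :
    0 ≤ legendreConj p A B w z := by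
  have hp := hpq.pos
  simpa [coupledPow, Real.zero_rpow hp.ne', Real.zero_rpow (half_pos hp).ne'] using
    le_legendreConj hpq hA hB 0 0 w z

lemma abs_dualPoint (hA : 0 ≤ A) (hq : q ≠ 1) (w : ℝ) :
    |dualPoint q A w| = A ^ (1 - q) * |w| ^ (q - 1) := by
  rcases eq_or_ne w 0 with rfl | hw
  · simp [dualPoint, Real.zero_rpow (sub_ne_zero.2 hq)]
  · rw [dualPoint, abs_mul, abs_mul, abs_of_nonneg (Real.rpow_nonneg hA _),
      abs_of_nonneg (Real.rpow_nonneg (abs_nonneg _) _)]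
    rcases hw.lt_or_gt with h | h <;> simp [h]

lemma dualPoint_mul_self (hq : q ≠ 0) (A w : ℝ) : dualPoint q A w * w = A ^ (1 - q) * |w| ^ q := by
  rcases eq_or_ne w 0 with rfl | hw
  · simp [Real.zero_rpow hq]
  · rw [dualPoint, mul_assoc, mul_right_comm, sign_mul_self, mul_comm |w|,
      ← Real.rpow_add_one (abs_ne_zero.2 hw), sub_add_cancel]

lemma mul_abs_mul_dualPoint_rpow (hpq : p.HolderConjugate q) (hA : 0 < A) {c : ℝ} (hc : 0 ≤ c)
    (w : ℝ) : A * |c * dualPoint q A w| ^ p = c ^ p * (A ^ (1 - q) * |w| ^ q) := by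
  have hexp : (q - 1) * p = q := hpq.symm.sub_one_mul_conj
  rw [abs_mul, abs_of_nonneg hc, abs_dualPoint hA.le hpq.symm.lt.ne' w,
    Real.mul_rpow hc (by positivity), Real.mul_rpow (by positivity) (by positivity),
    ← Real.rpow_mul hA.le, ← Real.rpow_mul (abs_nonneg w), hexp,
    show (1 - q) * p = -q by linear_combination -hexp, sub_eq_add_neg 1 q,
    Real.rpow_add hA, Real.rpow_one]
  ring

lemma coupledPow_mul_le (hp : 0 < p) (hA : 0 < A) (hB : 0 ≤ B) {bp : ℝ} (hBb : B ≤ bp)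
    (s t S T : ℝ) :
    coupledPow p A B (s * S) (t * T) ≤
      (|s| ^ p * (A * |S| ^ p) + bp * |s| ^ (p / 2) * |t| ^ (p / 2) * (A * |S| ^ p + A * |T| ^ p) +
        |t| ^ p * (A * |T| ^ p)) / p := by
  have hsq : ∀ r : ℝ, |r| ^ p = (|r| ^ (p / 2)) ^ 2 := fun r => by
    rw [← Real.rpow_natCast, ← Real.rpow_mul (abs_nonneg r)]
    norm_num
  have hmul : ∀ r r' : ℝ, |r * r'| ^ (p / 2) = |r| ^ (p / 2) * |r'| ^ (p / 2) := fun r r' => by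
    rw [abs_mul, Real.mul_rpow (abs_nonneg r) (abs_nonneg r')]
  unfold coupledPow
  rw [hmul, hmul, hsq (s * S), hsq (t * T), hmul, hmul, hsq s, hsq t, hsq S, hsq T]
  set σ := |s| ^ (p / 2)
  set τ := |t| ^ (p / 2)
  set x := |S| ^ (p / 2)
  set y := |T| ^ (p / 2)
  have hcross : 2 * B * x * y ≤ bp * (x ^ 2 + y ^ 2) := by
    have : 0 ≤ x * y := by positivity
    nlinarith [two_mul_le_add_sq x y]
  have hw : 0 ≤ A * σ * τ := by positivity
  rw [mul_comm (A / p), mul_div_assoc', div_le_div_iff_of_pos_right hp]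
  linear_combination mul_le_mul_of_nonneg_left hcross hw

lemma le_legendreConj_of_dualPoint (hpq : p.HolderConjugate q) (hA : 0 < A) (hB : 0 ≤ B)
    {bp : ℝ} (hBb : B ≤ bp) {c d : ℝ} (hc : 0 ≤ c) (hd : 0 ≤ d) (s t w z : ℝ) :
    (s * c - (|s| ^ p + bp * |s| ^ (p / 2) * |t| ^ (p / 2)) / p * c ^ p) * (A ^ (1 - q) * |w| ^ q) +
      (t * d - (|t| ^ p + bp * |s| ^ (p / 2) * |t| ^ (p / 2)) / p * d ^ p) *
        (A ^ (1 - q) * |z| ^ q) ≤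
      legendreConj p A B w z := by
  have hlag := le_legendreConj hpq hA hB (s * (c * dualPoint q A w)) (t * (d * dualPoint q A z)) w z
  have hf := coupledPow_mul_le hpq.pos hA hB hBb s t (c * dualPoint q A w) (d * dualPoint q A z)
  rw [mul_abs_mul_dualPoint_rpow hpq hA hc, mul_abs_mul_dualPoint_rpow hpq hA hd] at hf
  have hw := dualPoint_mul_self hpq.symm.ne_zero A w
  have hz := dualPoint_mul_self hpq.symm.ne_zero A z
  linear_combination hlag + hf - s * c * hw - t * d * hz

lemma le_mul_rpow_neg_inv (hpq : p.HolderConjugate q) {m K : ℝ} (hm : 0 ≤ m) (hK : 0 ≤ K)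
    (s : ℝ) : s * m ^ q⁻¹ - K / p ≤ (s * m ^ (-p⁻¹) - K / p * (m ^ (-p⁻¹)) ^ p) * m := by
  rcases hm.eq_or_lt with rfl | hm
  · rw [Real.zero_rpow (inv_ne_zero hpq.symm.ne_zero), mul_zero]
    have := hpq.pos
    simp only [zero_sub, mul_zero, Left.neg_nonpos_iff]
    positivity
  · have hc : m ^ (-p⁻¹) * m = m ^ q⁻¹ := by
      rw [← Real.rpow_add_one hm.ne', ← hpq.one_sub_inv, neg_add_eq_sub]
    have hcp : (m ^ (-p⁻¹)) ^ p * m = 1 := by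
      rw [← Real.rpow_mul hm.le, neg_mul, inv_mul_cancel₀ hpq.ne_zero, Real.rpow_neg_one,
        inv_mul_cancel₀ hm.ne']
    linear_combination K / p * hcp - s * hc

lemma measurable_ciSup_of_continuous {δ γ : Type*} [MeasurableSpace δ] [TopologicalSpace γ]
    [TopologicalSpace.SeparableSpace γ] {g : δ → γ → ℝ} (hm : ∀ z, Measurable fun x => g x z)
    (hc : ∀ x, Continuous (g x)) : Measurable fun x => ⨆ z, g x z := by
  obtain ⟨S, hSc, hSd⟩ := TopologicalSpace.exists_countable_dense γ
  have := hSc.to_subtype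
  simp_rw [← hSd.ciSup' (hc _)]
  exact Measurable.iSup fun z => hm z

lemma continuous_coupledPow (hp : 0 ≤ p) (A B : ℝ) :
    Continuous fun st : ℝ × ℝ => coupledPow p A B st.1 st.2 := by
  have hp2 : 0 ≤ p / 2 := by positivity
  unfold coupledPow
  fun_prop (disch := assumption)

section Integral

variable {α : Type*} [MeasurableSpace α] {μ : Measure α} {a b u v : α → ℝ} {a₀ bp : ℝ}

lemma measurable_legendreConj (hp : 0 ≤ p) (hma : Measurable a) (hmb : Measurable b)
    (hmu : Measurable u) (hmv : Measurable v) :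
    Measurable fun x => legendreConj p (a x) (b x) (u x) (v x) := by
  refine measurable_ciSup_of_continuous (fun st => ?_) fun x => ?_
  · unfold coupledPow
    fun_prop
  · exact ((continuous_fst.mul continuous_const).add (continuous_snd.mul continuous_const)).sub
      (continuous_coupledPow hp _ _)

lemma integrable_weightedPow (hpq : p.HolderConjugate q) (ha₀ : 0 < a₀) (hma : Measurable a)
    (ha : ∀ᵐ x ∂μ, a₀ ≤ a x) (hu : MemLp u (ENNReal.ofReal q) μ) :
    Integrable (fun x => a x ^ (1 - q) * |u x| ^ q) μ := by
  have hq := hpq.symm.pos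
  have hu' : Integrable (fun x => |u x| ^ q) μ := by
    simpa [Real.norm_eq_abs, ENNReal.toReal_ofReal hq.le] using
      hu.integrable_norm_rpow (by simpa using hq) ENNReal.ofReal_ne_top
  refine hu'.bdd_mul (c := a₀ ^ (1 - q)) (hma.pow_const _).aestronglyMeasurable ?_
  filter_upwards [ha] with x hx
  rw [Real.norm_of_nonneg (Real.rpow_nonneg (ha₀.trans_le hx).le _)]
  exact Real.rpow_le_rpow_of_nonpos ha₀ hx (by linarith [hpq.symm.lt])

lemma integrable_legendreConj (hpq : p.HolderConjugate q) (ha₀ : 0 < a₀) (hma : Measurable a)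
    (hmb : Measurable b) (hmu : Measurable u) (hmv : Measurable v) (ha : ∀ᵐ x ∂μ, a₀ ≤ a x)
    (hb : ∀ᵐ x ∂μ, 0 ≤ b x) (hu : MemLp u (ENNReal.ofReal q) μ)
    (hv : MemLp v (ENNReal.ofReal q) μ) :
    Integrable (fun x => legendreConj p (a x) (b x) (u x) (v x)) μ := by
  refine (((integrable_weightedPow hpq ha₀ hma ha hu).add
    (integrable_weightedPow hpq ha₀ hma ha hv)).div_const q).mono'
    (measurable_legendreConj hpq.pos.le hma hmb hmu hmv).aestronglyMeasurable ?_
  filter_upwards [ha, hb] with x hax hbx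
  have hax := ha₀.trans_le hax
  rw [Real.norm_of_nonneg (legendreConj_nonneg hpq hax hbx _ _)]
  exact legendreConj_le hpq hax hbx _ _

lemma sub_coupledPow_le_integral_legendreConj (hpq : p.HolderConjugate q) (ha₀ : 0 < a₀)
    (hbp : 0 ≤ bp) (hma : Measurable a) (hmb : Measurable b) (hmu : Measurable u)
    (hmv : Measurable v) (ha : ∀ᵐ x ∂μ, a₀ ≤ a x) (hb : ∀ᵐ x ∂μ, 0 ≤ b x ∧ b x ≤ bp)
    (hu : MemLp u (ENNReal.ofReal q) μ) (hv : MemLp v (ENNReal.ofReal q) μ) (s t : ℝ) :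
    s * (∫ x, a x ^ (1 - q) * |u x| ^ q ∂μ) ^ (1 / q) +
        t * (∫ x, a x ^ (1 - q) * |v x| ^ q ∂μ) ^ (1 / q) - coupledPow p 1 bp s t ≤
      ∫ x, legendreConj p (a x) (b x) (u x) (v x) ∂μ := by
  have hφu := integrable_weightedPow hpq ha₀ hma ha hu
  have hφv := integrable_weightedPow hpq ha₀ hma ha hv
  set mu := ∫ x, a x ^ (1 - q) * |u x| ^ q ∂μ
  set mv := ∫ x, a x ^ (1 - q) * |v x| ^ q ∂μ
  have hmu0 : 0 ≤ mu := integral_nonneg_of_ae <| by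
    filter_upwards [ha] with x hx
    exact mul_nonneg (Real.rpow_nonneg (ha₀.le.trans hx) _) (by positivity)
  have hmv0 : 0 ≤ mv := integral_nonneg_of_ae <| by
    filter_upwards [ha] with x hx
    exact mul_nonneg (Real.rpow_nonneg (ha₀.le.trans hx) _) (by positivity)
  set K := bp * |s| ^ (p / 2) * |t| ^ (p / 2)
  have hK : 0 ≤ K := by positivity
  set κu := s * mu ^ (-p⁻¹) - (|s| ^ p + K) / p * (mu ^ (-p⁻¹)) ^ p
  set κv := t * mv ^ (-p⁻¹) - (|t| ^ p + K) / p * (mv ^ (-p⁻¹)) ^ p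
  have hpt : ∀ᵐ x ∂μ, κu * (a x ^ (1 - q) * |u x| ^ q) + κv * (a x ^ (1 - q) * |v x| ^ q) ≤
      legendreConj p (a x) (b x) (u x) (v x) := by
    filter_upwards [ha, hb] with x hax hbx
    exact le_legendreConj_of_dualPoint hpq (ha₀.trans_le hax) hbx.1 hbx.2
      (Real.rpow_nonneg hmu0 _) (Real.rpow_nonneg hmv0 _) s t (u x) (v x)
  calc s * mu ^ (1 / q) + t * mv ^ (1 / q) - coupledPow p 1 bp s t
      = (s * mu ^ q⁻¹ - (|s| ^ p + K) / p) + (t * mv ^ q⁻¹ - (|t| ^ p + K) / p) := by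
        simp only [coupledPow, K, one_div]
        ring
    _ ≤ κu * mu + κv * mv := add_le_add
        (le_mul_rpow_neg_inv hpq hmu0 (by positivity) s)
        (le_mul_rpow_neg_inv hpq hmv0 (by positivity) t)
    _ = ∫ x, κu * (a x ^ (1 - q) * |u x| ^ q) + κv * (a x ^ (1 - q) * |v x| ^ q) ∂μ := by
        rw [integral_add (hφu.const_mul _) (hφv.const_mul _), integral_const_mul,
          integral_const_mul]
    _ ≤ _ := integral_mono_ae ((hφu.const_mul _).add (hφv.const_mul _))
        (integrable_legendreConj hpq ha₀ hma hmb hmu hmv ha (hb.mono fun _ h => h.1) hu hv) hpt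

end Integral

end

theorem stmt_19_general (N : ℕ) (p p' a₀ bp : ℝ) (hp : 2 < p) (hp' : p' = p / (p - 1))
    (ha₀ : 0 < a₀)
    (a b : (Fin N → ℝ) → ℝ) (hma : Measurable a) (hmb : Measurable b)
    (ha : ∀ᵐ x ∂(volume : Measure (Fin N → ℝ)), a₀ ≤ a x)
    (hb : ∀ᵐ x ∂(volume : Measure (Fin N → ℝ)), 0 ≤ b x ∧ b x ≤ bp)
    (u v : (Fin N → ℝ) → ℝ) (hmu : Measurable u) (hmv : Measurable v)
    (hu : MemLp u (ENNReal.ofReal p') (volume : Measure (Fin N → ℝ)))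
    (hv : MemLp v (ENNReal.ofReal p') (volume : Measure (Fin N → ℝ)))
    (h : (Fin N → ℝ) → ℝ → ℝ → ℝ)
    (hh : ∀ x sb tb, h x sb tb = ⨆ st : ℝ × ℝ,
      (st.1 * sb + st.2 * tb -
        (a x / p) * (|st.1| ^ p + 2 * b x * |st.1| ^ (p / 2) * |st.2| ^ (p / 2) + |st.2| ^ p)))
    (hplus : ℝ → ℝ → ℝ)
    (hhplus : ∀ sb tb : ℝ, hplus sb tb = ⨆ st : ℝ × ℝ,
      (st.1 * sb + st.2 * tb -
        (1 / p) * (|st.1| ^ p + 2 * bp * |st.1| ^ (p / 2) * |st.2| ^ (p / 2) + |st.2| ^ p))) :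
    hplus ((∫ x, a x ^ (1 - p') * |u x| ^ p') ^ (1 / p'))
        ((∫ x, a x ^ (1 - p') * |v x| ^ p') ^ (1 / p')) ≤
      ∫ x, h x (u x) (v x) := by
  have hpq : p.HolderConjugate p' :=
    (Real.holderConjugate_iff_eq_conjExponent (by linarith)).2 hp'
  obtain ⟨x, hbx, hbxp⟩ := hb.exists
  simp only [hh, hhplus]
  exact ciSup_le fun st => sub_coupledPow_le_integral_legendreConj hpq ha₀ (hbx.trans hbxp)
    hma hmb hmu hmv ha hb hu hv st.1 st.2

/-- with `h(x,·,·)` the Legendre transform of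
`f(x,s,t) = (a(x)/p)(|s|^p + 2b(x)|s|^(p/2)|t|^(p/2) + |t|^p)` and `h₊` the Legendre transform
of `f₊(s,t) = (1/p)(|s|^p + 2b₊|s|^(p/2)|t|^(p/2) + |t|^p)`, one has for `ū, v̄ ∈ L^(p')(ℝᴺ)`
`∫ h(x, ū(x), v̄(x)) dx ≥ h₊(‖a^(-1/p) ū‖_(p'), ‖a^(-1/p) v̄‖_(p'))`, where
`‖a^(-1/p) w‖_(p') = (∫ a(x)^(1-p') |w(x)|^(p') dx)^(1/p')`. -/
theorem stmt_19 (N : ℕ) (hN : 1 ≤ N) (p p' a₀ bp : ℝ) (hp : 2 < p) (hp' : p' = p / (p - 1))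
    (ha₀ : 0 < a₀) (hbp : bp ≤ p - 1)
    (a b : (Fin N → ℝ) → ℝ) (hma : Measurable a) (hmb : Measurable b)
    (ha : ∀ᵐ x ∂(volume : Measure (Fin N → ℝ)), a₀ ≤ a x)
    (hb : ∀ᵐ x ∂(volume : Measure (Fin N → ℝ)), 0 ≤ b x ∧ b x ≤ bp)
    (u v : (Fin N → ℝ) → ℝ) (hmu : Measurable u) (hmv : Measurable v)
    (hu : MemLp u (ENNReal.ofReal p') (volume : Measure (Fin N → ℝ)))
    (hv : MemLp v (ENNReal.ofReal p') (volume : Measure (Fin N → ℝ)))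
    (h : (Fin N → ℝ) → ℝ → ℝ → ℝ)
    (hh : ∀ x sb tb, h x sb tb = ⨆ st : ℝ × ℝ,
      (st.1 * sb + st.2 * tb -
        (a x / p) * (|st.1| ^ p + 2 * b x * |st.1| ^ (p / 2) * |st.2| ^ (p / 2) + |st.2| ^ p)))
    (hplus : ℝ → ℝ → ℝ)
    (hhplus : ∀ sb tb : ℝ, hplus sb tb = ⨆ st : ℝ × ℝ,
      (st.1 * sb + st.2 * tb -
        (1 / p) * (|st.1| ^ p + 2 * bp * |st.1| ^ (p / 2) * |st.2| ^ (p / 2) + |st.2| ^ p))) :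
    hplus ((∫ x, a x ^ (1 - p') * |u x| ^ p') ^ (1 / p'))
        ((∫ x, a x ^ (1 - p') * |v x| ^ p') ^ (1 / p')) ≤
      ∫ x, h x (u x) (v x) :=
  stmt_19_general N p p' a₀ bp hp hp' ha₀ a b hma hmb ha hb u v hmu hmv hu hv h hh hplus hhplus
end
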